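/- Suppose f = g ∘ ℬ with ℬ : E₁ → E₃ a continuous linear map and g : E₃ → ℝ differentiable and α_g-strongly convex, R_Q is the indicator function of a nonempty compact convex polytope ℱ ⊆ E, and the augmented Lagrangian L_ρ has a saddle point. Then there exists b* ∈ E₃ such that the optimal solution set of Problem (OP) satisfies 𝒫* = {q = (x,y) ∈ ℱ : ℬx = b* and 𝒦q = 0}. -/
import Mathlib


open scoped RealInnerProductSpace
noncomputable section

variable {E₁ E₂ E₃ : Type*}
  [NormedAddCommGroup E₁] [InnerProductSpace ℝ E₁] [FiniteDimensional ℝ E₁]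
  [NormedAddCommGroup E₂] [InnerProductSpace ℝ E₂] [FiniteDimensional ℝ E₂]
  [NormedAddCommGroup E₃] [InnerProductSpace ℝ E₃] [FiniteDimensional ℝ E₃]

/-- first component of a point of `E := E₁ ×₂ E₂` -/
def xPart (q : WithLp 2 (E₁ × E₂)) : E₁ := (WithLp.equiv 2 (E₁ × E₂) q).1

/-- The constraint map `𝒦(x,y) := 𝒜x − y`, as a continuous linear map. -/
def Kmap (A : E₁ →L[ℝ] E₂) : WithLp 2 (E₁ × E₂) →L[ℝ] E₂ :=
  (A.comp (ContinuousLinearMap.fst ℝ E₁ E₂) - ContinuousLinearMap.snd ℝ E₁ E₂).comp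
    (WithLp.prodContinuousLinearEquiv 2 ℝ E₁ E₂).toContinuousLinearMap

/-- objective of Problem (OP): `h(q) := f(x) + R_Q(q)` -/
def hOP (f : E₁ → ℝ) (RQ : WithLp 2 (E₁ × E₂) → EReal) (q : WithLp 2 (E₁ × E₂)) : EReal :=
  (f (xPart q) : EReal) + RQ q

/-- the augmented Lagrangian `L_ρ(q,w) := h(q) + ⟨w,𝒦q⟩ + (ρ/2)‖𝒦q‖²` -/
def AL (f : E₁ → ℝ) (RQ : WithLp 2 (E₁ × E₂) → EReal) (A : E₁ →L[ℝ] E₂) (ρ : ℝ)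
    (q : WithLp 2 (E₁ × E₂)) (w : E₂) : EReal :=
  hOP f RQ q + ((⟪w, Kmap A q⟫ + ρ / 2 * ‖Kmap A q‖ ^ 2 : ℝ) : EReal)

/-- saddle point of the augmented Lagrangian -/
def IsSaddle (f : E₁ → ℝ) (RQ : WithLp 2 (E₁ × E₂) → EReal) (A : E₁ →L[ℝ] E₂) (ρ : ℝ)
    (qs : WithLp 2 (E₁ × E₂)) (ws : E₂) : Prop :=
  ∀ q : WithLp 2 (E₁ × E₂), ∀ w : E₂,
    AL f RQ A ρ qs w ≤ AL f RQ A ρ qs ws ∧ AL f RQ A ρ qs ws ≤ AL f RQ A ρ q ws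

/-- set of optimal solutions of Problem (OP) -/
def OptSet (f : E₁ → ℝ) (RQ : WithLp 2 (E₁ × E₂) → EReal) (A : E₁ →L[ℝ] E₂) :
    Set (WithLp 2 (E₁ × E₂)) :=
  {q | Kmap A q = 0 ∧ ∀ p, Kmap A p = 0 → hOP f RQ q ≤ hOP f RQ p}

/-- under the polytope/strongly-convex-composite assumptions, there is
`b* ∈ E₃` such that `𝒫* = {q = (x,y) ∈ ℱ : ℬx = b* and 𝒦q = 0}`. -/
theorem optset_eq_fiber (g : E₃ → ℝ) (B : E₁ →L[ℝ] E₃) (f : E₁ → ℝ)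
    (hf : f = fun x => g (B x))
    (αg : ℝ) (hαg : 0 < αg) (hgdiff : Differentiable ℝ g)
    (hgsc : ∀ u v : E₃, g v ≥ g u + ⟪gradient g u, v - u⟫ + αg / 2 * ‖v - u‖ ^ 2)
    (F : Set (WithLp 2 (E₁ × E₂)))
    (hpoly : ∃ s : Finset (WithLp 2 (E₁ × E₂)), F = convexHull ℝ (s : Set (WithLp 2 (E₁ × E₂))))
    (hFne : F.Nonempty) (hFcpt : IsCompact F) (hFconv : Convex ℝ F)
    (RQ : WithLp 2 (E₁ × E₂) → EReal)
    (hRQ : ∀ q, (q ∈ F → RQ q = 0) ∧ (q ∉ F → RQ q = ⊤))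
    (A : E₁ →L[ℝ] E₂) (ρ : ℝ) (hρ : 0 < ρ)
    (hsaddle : ∃ qs ws, IsSaddle f RQ A ρ qs ws)
    (hPne : (OptSet f RQ A).Nonempty) :
    ∃ bs : E₃, OptSet f RQ A = {q | q ∈ F ∧ B (xPart q) = bs ∧ Kmap A q = 0} := by

  classical
  have hfx : ∀ x : E₁, f x = g (B x) := fun x => by rw [hf]
  have hmem : ∀ q ∈ F, hOP f RQ q = ((f (xPart q) : ℝ) : EReal) := by
    intro q hq
    rw [hOP, (hRQ q).1 hq, add_zero]
  have hnot : ∀ q, q ∉ F → hOP f RQ q = ⊤ := by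
    intro q hq
    rw [hOP, (hRQ q).2 hq]
    rfl
  have hALmem : ∀ q ∈ F, ∀ w, AL f RQ A ρ q w
      = ((f (xPart q) + (⟪w, Kmap A q⟫ + ρ / 2 * ‖Kmap A q‖ ^ 2) : ℝ) : EReal) := by
    intro q hq w
    rw [AL, hmem q hq, ← EReal.coe_add]
  obtain ⟨qs, ws, hss⟩ := hsaddle
  obtain ⟨z, hz⟩ := hFne
  -- the saddle point lies in F
  have hqsF : qs ∈ F := by
    by_contra hqs
    have h1 := (hss z ws).2
    rw [AL, hnot qs hqs, EReal.top_add_coe, hALmem z hz ws, top_le_iff] at h1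
    exact (EReal.coe_ne_top _) h1
  -- the saddle point is feasible
  have hK : Kmap A qs = 0 := by
    have h1 := (hss qs (ws + Kmap A qs)).1
    rw [hALmem qs hqsF, hALmem qs hqsF, EReal.coe_le_coe_iff, inner_add_left] at h1
    have h2 : ⟪Kmap A qs, Kmap A qs⟫ ≤ 0 := by linarith
    exact real_inner_self_nonpos.mp h2
  -- the saddle point is optimal
  have hopt : ∀ p, Kmap A p = 0 → ((f (xPart qs) : ℝ) : EReal) ≤ hOP f RQ p := by
    intro p hp
    have h1 := (hss p ws).2
    rw [AL, AL, hK, hp] at h1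
    simp only [inner_zero_right, norm_zero, add_zero, zero_add, mul_zero] at h1
    have hz2 : ((0 : ℝ) ^ 2 : ℝ) = 0 := by norm_num
    rw [hmem qs hqsF] at h1
    simpa [hz2] using h1
  have hqsOpt : qs ∈ OptSet f RQ A := by
    refine ⟨hK, fun p hp => ?_⟩
    rw [hmem qs hqsF]
    exact hopt p hp
  -- every optimal point lies in F
  have hsubF : ∀ q ∈ OptSet f RQ A, q ∈ F := by
    intro q hq
    by_contra h
    have h1 := hq.2 qs hK
    rw [hnot q h, hmem qs hqsF, top_le_iff] at h1
    exact (EReal.coe_ne_top _) h1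
  -- the image under B ∘ xPart is constant on the optimal set
  have hconst : ∀ q₁ ∈ OptSet f RQ A, ∀ q₂ ∈ OptSet f RQ A,
      B (xPart q₁) = B (xPart q₂) := by
    intro q₁ h₁ q₂ h₂
    have hF₁ := hsubF q₁ h₁
    have hF₂ := hsubF q₂ h₂
    have heq : f (xPart q₁) = f (xPart q₂) := by
      have a := h₁.2 q₂ h₂.1
      have b := h₂.2 q₁ h₁.1
      rw [hmem _ hF₁, hmem _ hF₂] at a b
      exact_mod_cast le_antisymm a b
    set m : WithLp 2 (E₁ × E₂) := (1/2 : ℝ) • q₁ + (1/2 : ℝ) • q₂ with hm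
    have hmF : m ∈ F := hFconv hF₁ hF₂ (by norm_num) (by norm_num) (by norm_num)
    have hmK : Kmap A m = 0 := by
      rw [hm]; simp [h₁.1, h₂.1]
    have hxm : xPart m = (1/2 : ℝ) • xPart q₁ + (1/2 : ℝ) • xPart q₂ := rfl
    set u := B (xPart q₁) with hu
    set v := B (xPart q₂) with hv
    have hBm : B (xPart m) = (1/2 : ℝ) • u + (1/2 : ℝ) • v := by
      rw [hxm, map_add, map_smul, map_smul]
    have hval : f (xPart q₁) ≤ f (xPart m) := by
      have h3 := h₁.2 m hmK
      rw [hmem _ hF₁, hmem _ hmF] at h3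
      exact_mod_cast h3
    -- strong-convexity argument
    set w : E₃ := (1/2 : ℝ) • u + (1/2 : ℝ) • v with hw
    have hsc1 := hgsc w u
    have hsc2 := hgsc w v
    have hsum0 : (u - w) + (v - w) = 0 := by rw [hw]; module
    have hinner : ⟪gradient g w, u - w⟫ + ⟪gradient g w, v - w⟫ = 0 := by
      rw [← inner_add_right, hsum0, inner_zero_right]
    have hgu : g u = g v := by
      have e1 : f (xPart q₁) = g u := by rw [hfx, hu]
      have e2 : f (xPart q₂) = g v := by rw [hfx, hv]
      rw [← e1, ← e2, heq]
    have hgw : g u ≤ g w := by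
      have e1 : f (xPart q₁) = g u := by rw [hfx, hu]
      have e3 : f (xPart m) = g w := by rw [hfx, hBm, hw]
      rw [← e1, ← e3]; exact hval
    have hnuw : ‖u - w‖ ^ 2 = 0 := by
      nlinarith [sq_nonneg ‖u - w‖, sq_nonneg ‖v - w‖, hsc1, hsc2]
    have huw : u - w = 0 := by
      have := pow_eq_zero_iff (n := 2) (by norm_num) |>.mp hnuw
      exact norm_eq_zero.mp this
    have huv : u - v = 0 := by
      have h4 : u - w = (1/2 : ℝ) • (u - v) := by rw [hw]; module
      rw [h4] at huw
      have := smul_eq_zero.mp huw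
      rcases this with h5 | h5
      · norm_num at h5
      · exact h5
    exact sub_eq_zero.mp huv
  obtain ⟨q₀, hq₀⟩ := hPne
  refine ⟨B (xPart q₀), ?_⟩
  ext q
  constructor
  · intro hq
    exact ⟨hsubF q hq, hconst q hq q₀ hq₀, hq.1⟩
  · rintro ⟨hqF, hqB, hqK⟩
    refine ⟨hqK, fun p hp => ?_⟩
    have hfeq : f (xPart q) = f (xPart q₀) := by
      rw [hfx, hfx, hqB]
    rw [hmem q hqF, hfeq, ← hmem q₀ (hsubF q₀ hq₀)]
    exact hq₀.2 p hp


end
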